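/- arXiv:0711.2218 — 5 statements merged into one kernel-verified Lean document; each statement's English description precedes it below -/
import Mathlib

section
/- Suppose the boundary map γ0 : H0^1 → G is bounded with dense but proper range G^{1/2} = ran γ0 ⊊ G, and ker γ0 is dense in H0. Then the restriction γ̂0 := γ0|N0 of γ0 to N0 = ker(δd+1) is injective with range G^{1/2}, and its inverse (γ̂0)^{-1} : G^{1/2} → N0 is an unbounded operator on G (i.e., it is not bounded with respect to the norm of G). -/
open scoped InnerProductSpace
open ContinuousLinearMap

/-!
For the graph inner product of `H0^1`, Green's identity shows that `N0` is exactly the orthogonal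
complement of `ker γ0`. Hence `γ0` maps `N0` bijectively onto its range. A bounded inverse would
make `γ0` bounded below on `N0`, which forces the range to be closed; a closed dense range is all
of `G`, contradicting properness.
-/

section OrthogonalKernel

variable {𝕜 E F : Type*} [RCLike 𝕜] [NormedAddCommGroup E] [InnerProductSpace 𝕜 E]
  [NormedAddCommGroup F] [NormedSpace 𝕜 F] (T : E →L[𝕜] F)

theorem injOn_orthogonal_ker : Set.InjOn T T.kerᗮ := by
  intro f hf f' hf' hT
  have hker : f - f' ∈ T.ker := by simp [hT]
  have horth : f - f' ∈ T.kerᗮ := T.kerᗮ.sub_mem hf hf'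
  exact sub_eq_zero.mp <| (Submodule.mem_bot 𝕜).mp <|
    T.ker.inf_orthogonal_eq_bot ▸ ⟨hker, horth⟩

variable [CompleteSpace E]

theorem image_orthogonal_ker : T '' T.kerᗮ = Set.range T := by
  refine (Set.image_subset_range _ _).antisymm ?_
  rintro _ ⟨f, rfl⟩
  obtain ⟨a, ha, b, hb, rfl⟩ := T.ker.exists_add_mem_mem_orthogonal f
  exact ⟨b, hb, by simp [show T a = 0 from ha]⟩

theorem isClosed_range_of_norm_le_mul_norm_on_orthogonal_ker {C : ℝ}
    (hC : ∀ f ∈ T.kerᗮ, ‖f‖ ≤ C * ‖T f‖) : IsClosed (Set.range T) := by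
  let T' : T.kerᗮ →L[𝕜] F := T.comp T.kerᗮ.subtypeL
  have hT' : AntilipschitzWith C.toNNReal T' :=
    T'.antilipschitz_of_bound fun f => (hC f f.2).trans <|
      mul_le_mul_of_nonneg_right (Real.le_coe_toNNReal C) (norm_nonneg _)
  have hrange : Set.range T' = Set.range T := by
    rw [← image_orthogonal_ker T, ← Subtype.range_coe (s := (T.kerᗮ : Set E)), ← Set.range_comp]
    rfl
  exact hrange ▸ hT'.isClosed_range T'.uniformContinuous

end OrthogonalKernel

/-- `∃ g, ι1 g = d f ∧ δ g = -ι0 f` encodes `d f ∈ dom δ ∧ δ (d f) = -f`, i.e. `f ∈ N0`. -/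
theorem exists_delta_eq_neg_iff_mem_orthogonal_ker
    {𝕜 H0 H1 G H01 H11 : Type*} [RCLike 𝕜]
    [NormedAddCommGroup H0] [InnerProductSpace 𝕜 H0]
    [NormedAddCommGroup H1] [InnerProductSpace 𝕜 H1]
    [NormedAddCommGroup G] [NormedSpace 𝕜 G]
    [NormedAddCommGroup H01] [InnerProductSpace 𝕜 H01]
    [NormedAddCommGroup H11] [NormedSpace 𝕜 H11]
    {ι0 : H01 →L[𝕜] H0} {d : H01 →L[𝕜] H1} {γ0 : H01 →L[𝕜] G}
    {ι1 : H11 →L[𝕜] H1} {δ : H11 →L[𝕜] H0}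
    (hgraph0 : ∀ f g : H01, ⟪f, g⟫_𝕜 = ⟪ι0 f, ι0 g⟫_𝕜 + ⟪d f, d g⟫_𝕜)
    (hadj1 : ∀ (g : H11) (f : H01), γ0 f = 0 → ⟪d f, ι1 g⟫_𝕜 = ⟪ι0 f, δ g⟫_𝕜)
    (hadj2 : ∀ (g1 : H1) (h0 : H0),
      (∀ f : H01, γ0 f = 0 → ⟪d f, g1⟫_𝕜 = ⟪ι0 f, h0⟫_𝕜) →
      ∃ g : H11, ι1 g = g1 ∧ δ g = h0)
    (f : H01) :
    (∃ g : H11, ι1 g = d f ∧ δ g = -(ι0 f)) ↔ f ∈ γ0.kerᗮ := by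
  simp only [Submodule.mem_orthogonal, LinearMap.mem_ker, coe_coe]
  constructor
  · rintro ⟨g, hg1, hg2⟩ u hu
    have h := hadj1 g u hu
    rw [hg1, hg2, inner_neg_right] at h
    rw [hgraph0]
    linear_combination h
  · intro hf
    refine hadj2 (d f) (-(ι0 f)) fun u hu => ?_
    have h := hf u hu
    rw [hgraph0] at h
    rw [inner_neg_right]
    linear_combination h

theorem statement_2_general
    {H0 H1 G H01 H11 : Type*}
    [NormedAddCommGroup H0] [InnerProductSpace ℂ H0]
    [NormedAddCommGroup H1] [InnerProductSpace ℂ H1]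
    [NormedAddCommGroup G] [InnerProductSpace ℂ G]
    [NormedAddCommGroup H01] [InnerProductSpace ℂ H01] [CompleteSpace H01]
    [NormedAddCommGroup H11] [InnerProductSpace ℂ H11]
    (ι0 : H01 →L[ℂ] H0) (d : H01 →L[ℂ] H1) (γ0 : H01 →L[ℂ] G)
    (ι1 : H11 →L[ℂ] H1) (δ : H11 →L[ℂ] H0)
    (hgraph0 : ∀ f g : H01, ⟪f, g⟫_ℂ = ⟪ι0 f, ι0 g⟫_ℂ + ⟪d f, d g⟫_ℂ)
    (hran : Dense (Set.range γ0))
    (hadj1 : ∀ (g : H11) (f : H01), γ0 f = 0 → ⟪d f, ι1 g⟫_ℂ = ⟪ι0 f, δ g⟫_ℂ)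
    (hadj2 : ∀ (g1 : H1) (h0 : H0),
      (∀ f : H01, γ0 f = 0 → ⟪d f, g1⟫_ℂ = ⟪ι0 f, h0⟫_ℂ) →
      ∃ g : H11, ι1 g = g1 ∧ δ g = h0)
    (hproper : Set.range γ0 ≠ Set.univ)
    : (∀ f f' : H01, (∃ g : H11, ι1 g = d f ∧ δ g = -(ι0 f)) →
        (∃ g : H11, ι1 g = d f' ∧ δ g = -(ι0 f')) → γ0 f = γ0 f' → f = f') ∧
      (γ0 '' {f : H01 | ∃ g : H11, ι1 g = d f ∧ δ g = -(ι0 f)} = Set.range γ0) ∧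
      ¬ (∃ C : ℝ, ∀ f : H01, (∃ g : H11, ι1 g = d f ∧ δ g = -(ι0 f)) →
          ‖f‖ ≤ C * ‖γ0 f‖) := by
  have hN0 := exists_delta_eq_neg_iff_mem_orthogonal_ker hgraph0 hadj1 hadj2
  simp only [hN0]
  refine ⟨fun f f' hf hf' => injOn_orthogonal_ker γ0 hf hf', image_orthogonal_ker γ0, ?_⟩
  rintro ⟨C, hC⟩
  have hclosed := isClosed_range_of_norm_le_mul_norm_on_orthogonal_ker γ0 hC
  exact hproper (hclosed.closure_eq ▸ hran.closure_eq)

theorem statement_2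
    {H0 H1 G H01 H11 : Type*}
    [NormedAddCommGroup H0] [InnerProductSpace ℂ H0] [CompleteSpace H0]
    [NormedAddCommGroup H1] [InnerProductSpace ℂ H1] [CompleteSpace H1]
    [NormedAddCommGroup G] [InnerProductSpace ℂ G] [CompleteSpace G]
    [NormedAddCommGroup H01] [InnerProductSpace ℂ H01] [CompleteSpace H01]
    [NormedAddCommGroup H11] [InnerProductSpace ℂ H11] [CompleteSpace H11]
    (ι0 : H01 →L[ℂ] H0) (d : H01 →L[ℂ] H1) (γ0 : H01 →L[ℂ] G)
    (ι1 : H11 →L[ℂ] H1) (δ : H11 →L[ℂ] H0)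
    (hι0 : Function.Injective ι0) (hι1 : Function.Injective ι1)
    (hgraph0 : ∀ f g : H01, ⟪f, g⟫_ℂ = ⟪ι0 f, ι0 g⟫_ℂ + ⟪d f, d g⟫_ℂ)
    (hgraph1 : ∀ f g : H11, ⟪f, g⟫_ℂ = ⟪ι1 f, ι1 g⟫_ℂ + ⟪δ f, δ g⟫_ℂ)
    (hdom : Dense (Set.range ι0))
    (hker : Dense (ι0 '' {f : H01 | γ0 f = 0}))
    (hran : Dense (Set.range γ0))
    (hadj1 : ∀ (g : H11) (f : H01), γ0 f = 0 → ⟪d f, ι1 g⟫_ℂ = ⟪ι0 f, δ g⟫_ℂ)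
    (hadj2 : ∀ (g1 : H1) (h0 : H0),
      (∀ f : H01, γ0 f = 0 → ⟪d f, g1⟫_ℂ = ⟪ι0 f, h0⟫_ℂ) →
      ∃ g : H11, ι1 g = g1 ∧ δ g = h0)
    (hproper : Set.range γ0 ≠ Set.univ)
    : (∀ f f' : H01, (∃ g : H11, ι1 g = d f ∧ δ g = -(ι0 f)) →
        (∃ g : H11, ι1 g = d f' ∧ δ g = -(ι0 f')) → γ0 f = γ0 f' → f = f') ∧
      (γ0 '' {f : H01 | ∃ g : H11, ι1 g = d f ∧ δ g = -(ι0 f)} = Set.range γ0) ∧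
      ¬ (∃ C : ℝ, ∀ f : H01, (∃ g : H11, ι1 g = d f ∧ δ g = -(ι0 f)) →
          ‖f‖ ≤ C * ‖γ0 f‖) :=
  statement_2_general ι0 d γ0 ι1 δ hgraph0 hran hadj1 hadj2 hproper
end

section
/- The adjoint γ0* : G → H0^1 of the boundary map is bounded, and for any φ ∈ G the element h0 := γ0* φ lies in N0 = ker(δd+1), satisfies γ0 h0 ∈ dom Λ, and Λ γ0 h0 = φ; i.e., γ0*φ is the unique Neumann-type solution. -/
open scoped InnerProductSpace
open ContinuousLinearMap

theorem statement_5
    {H0 H1 G H01 H11 : Type*}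
    [NormedAddCommGroup H0] [InnerProductSpace ℂ H0] [CompleteSpace H0]
    [NormedAddCommGroup H1] [InnerProductSpace ℂ H1] [CompleteSpace H1]
    [NormedAddCommGroup G] [InnerProductSpace ℂ G] [CompleteSpace G]
    [NormedAddCommGroup H01] [InnerProductSpace ℂ H01] [CompleteSpace H01]
    [NormedAddCommGroup H11] [InnerProductSpace ℂ H11] [CompleteSpace H11]
    (ι0 : H01 →L[ℂ] H0) (d : H01 →L[ℂ] H1) (γ0 : H01 →L[ℂ] G)
    (ι1 : H11 →L[ℂ] H1) (δ : H11 →L[ℂ] H0)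
    (hι0 : Function.Injective ι0) (hι1 : Function.Injective ι1)
    (hgraph0 : ∀ f g : H01, ⟪f, g⟫_ℂ = ⟪ι0 f, ι0 g⟫_ℂ + ⟪d f, d g⟫_ℂ)
    (hgraph1 : ∀ f g : H11, ⟪f, g⟫_ℂ = ⟪ι1 f, ι1 g⟫_ℂ + ⟪δ f, δ g⟫_ℂ)
    (hdom : Dense (Set.range ι0))
    (hker : Dense (ι0 '' {f : H01 | γ0 f = 0}))
    (hran : Dense (Set.range γ0))
    (hadj1 : ∀ (g : H11) (f : H01), γ0 f = 0 → ⟪d f, ι1 g⟫_ℂ = ⟪ι0 f, δ g⟫_ℂ)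
    (hadj2 : ∀ (g1 : H1) (h0 : H0),
      (∀ f : H01, γ0 f = 0 → ⟪d f, g1⟫_ℂ = ⟪ι0 f, h0⟫_ℂ) →
      ∃ g : H11, ι1 g = g1 ∧ δ g = h0)
    : (∃ C : ℝ, ∀ φ : G, ‖(ContinuousLinearMap.adjoint γ0) φ‖ ≤ C * ‖φ‖) ∧
      (∀ φ : G,
        (∃ g : H11, ι1 g = d ((ContinuousLinearMap.adjoint γ0) φ) ∧
          δ g = -(ι0 ((ContinuousLinearMap.adjoint γ0) φ))) ∧
        (∀ ψ : G, γ0 ((ContinuousLinearMap.adjoint γ0) ψ) =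
            γ0 ((ContinuousLinearMap.adjoint γ0) φ) → ψ = φ) ∧
        (∀ h' : H01, (∃ g : H11, ι1 g = d h' ∧ δ g = -(ι0 h')) →
          γ0 h' = γ0 ((ContinuousLinearMap.adjoint γ0) φ) →
          h' = (ContinuousLinearMap.adjoint γ0) φ)) := by
  classical
  set A := ContinuousLinearMap.adjoint γ0 with hA
  -- A χ = 0 → χ = 0
  have Ainj : ∀ χ : G, A χ = 0 → χ = 0 := by
    intro χ hχ
    have hall : ∀ v : G, ⟪v, χ⟫_ℂ = 0 := by
      have hcl : IsClosed {v : G | ⟪v, χ⟫_ℂ = 0} :=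
        isClosed_eq (continuous_inner.comp (Continuous.prodMk continuous_id continuous_const)) continuous_const
    -- range γ0 ⊆ that closed set
      have hsub : Set.range γ0 ⊆ {v : G | ⟪v, χ⟫_ℂ = 0} := by
        rintro _ ⟨f, rfl⟩
        have : ⟪γ0 f, χ⟫_ℂ = ⟪f, A χ⟫_ℂ := by
          rw [hA, ContinuousLinearMap.adjoint_inner_right]
        simp [this, hχ]
      have := hran.mono hsub
      have huniv : {v : G | ⟪v, χ⟫_ℂ = 0} = Set.univ := by
        have := hcl.closure_subset_iff.mpr hsub
        rw [hran.closure_eq] at this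
        exact Set.eq_univ_of_univ_subset this
      intro v; have : v ∈ {v : G | ⟪v, χ⟫_ℂ = 0} := huniv ▸ Set.mem_univ v
      exact this
    have := hall χ
    exact inner_self_eq_zero.mp this
  -- solutions of the Neumann problem are orthogonal to ker γ0
  have perp : ∀ h : H01, (∃ g : H11, ι1 g = d h ∧ δ g = -(ι0 h)) →
      ∀ f : H01, γ0 f = 0 → ⟪f, h⟫_ℂ = 0 := by
    rintro h ⟨g, hg1, hg2⟩ f hf
    have h1 : ⟪d f, d h⟫_ℂ = ⟪ι0 f, -(ι0 h)⟫_ℂ := by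
      rw [← hg1, ← hg2]; exact hadj1 g f hf
    rw [hgraph0 f h, h1, inner_neg_right]
    ring
  -- A φ solves the Neumann problem
  have exA : ∀ φ : G, ∃ g : H11, ι1 g = d (A φ) ∧ δ g = -(ι0 (A φ)) := by
    intro φ
    apply hadj2
    intro f hf
    have h0 : ⟪f, A φ⟫_ℂ = 0 := by
      rw [hA, ContinuousLinearMap.adjoint_inner_right, hf, inner_zero_left]
    have := hgraph0 f (A φ)
    rw [h0] at this
    rw [inner_neg_right]
    linear_combination -this
  refine ⟨⟨‖A‖, fun φ => A.le_opNorm φ⟩, fun φ => ⟨exA φ, ?_, ?_⟩⟩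
  · intro ψ hψ
    have hχ : γ0 (A (ψ - φ)) = 0 := by
      rw [map_sub, map_sub, hψ, sub_self]
    have : ⟪A (ψ - φ), A (ψ - φ)⟫_ℂ = 0 := by
      rw [hA, ContinuousLinearMap.adjoint_inner_left, ← hA, hχ, inner_zero_right]
    have := Ainj _ (inner_self_eq_zero.mp this)
    exact sub_eq_zero.mp this
  · intro h' hex hγ
    have hp1 := perp h' hex
    have hp2 := perp (A φ) (exA φ)
    set e := h' - A φ with he
    have hγe : γ0 e = 0 := by rw [he, map_sub, hγ, sub_self]
    have : ⟪e, e⟫_ℂ = 0 := by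
      rw [he]
      rw [inner_sub_right, hp1 _ hγe, hp2 _ hγe, sub_zero]
    have := inner_self_eq_zero.mp this
    exact sub_eq_zero.mp this
end

section
/- Define the boundary map of order 1 by γ1 := -γ0 ∘ δ ∘ P1, where P1 is the orthogonal projection in H1^1 = dom δ (graph norm) onto N1 = ker(dδ+1). Then ker γ1 = dom d* (viewed inside dom δ), γ1 is bounded from H1^1 to G with operator norm equal to ‖γ0‖, and ran γ1 = ran γ0 = G^{1/2}. -/
/-!
Write `K ⊆ H11` for `dom d*` and call `(h, m) ∈ H01 × H11` a rotated pair when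
`(ι0 h, d h) = (δ m, -ι1 m)`, i.e. `m ∈ N1 = ker (dδ + 1)` and `h = δ m`. For a rotated pair the
graph norms give `‖h‖ = ‖m‖`. Every element of `Kᗮ` is the second entry of a rotated pair (a Riesz
argument), and every element of `(ker γ0)ᗮ` the first entry of one (because `dom d* ⊆ dom δ`).
Splitting `g = k + m` along `K ⊕ Kᗮ` gives `γ1 g = γ0 (-h)` with `‖h‖ ≤ ‖g‖`; splitting
`f = f0 + h` along `ker γ0 ⊕ (ker γ0)ᗮ` gives `γ0 f = γ1 (-m)` with `‖m‖ ≤ ‖f‖`. These two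
reductions give equal norms and equal ranges; for the kernel, `γ0 h = 0` puts `h` in the domain
of `d0`, and then `m = 0` since `d0* = δ`.
-/

open scoped InnerProductSpace
open ContinuousLinearMap

theorem Submodule.exists_add_mem_mem_orthogonal_norm_le {𝕜 E : Type*} [RCLike 𝕜]
    [NormedAddCommGroup E] [InnerProductSpace 𝕜 E] (K : Submodule 𝕜 E)
    [K.HasOrthogonalProjection] (x : E) :
    ∃ k ∈ K, ∃ m ∈ Kᗮ, x = k + m ∧ ‖m‖ ≤ ‖x‖ :=
  ⟨x - Kᗮ.starProjection x, by simp,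
    Kᗮ.starProjection x, Kᗮ.starProjection_apply_mem x, (sub_add_cancel _ _).symm,
    Kᗮ.norm_starProjection_apply_le x⟩

theorem ContinuousLinearMap.opNorm_le_of_forall_exists_norm_le {𝕜 E E' F : Type*}
    [NontriviallyNormedField 𝕜] [SeminormedAddCommGroup E] [SeminormedAddCommGroup E']
    [SeminormedAddCommGroup F] [NormedSpace 𝕜 E] [NormedSpace 𝕜 E'] [NormedSpace 𝕜 F]
    (A : E →L[𝕜] F) (B : E' →L[𝕜] F)
    (hAB : ∀ x, ∃ y, ‖y‖ ≤ ‖x‖ ∧ A x = B y) : ‖A‖ ≤ ‖B‖ :=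
  A.opNorm_le_bound (norm_nonneg B) fun x ↦ by
    obtain ⟨y, hyx, hxy⟩ := hAB x
    calc ‖A x‖ = ‖B y‖ := by rw [hxy]
      _ ≤ ‖B‖ * ‖y‖ := B.le_opNorm y
      _ ≤ ‖B‖ * ‖x‖ := by gcongr

section GraphSpaces

variable {H0 H1 H01 H11 : Type*}
  [NormedAddCommGroup H0] [InnerProductSpace ℂ H0]
  [NormedAddCommGroup H1] [InnerProductSpace ℂ H1]
  [NormedAddCommGroup H01] [InnerProductSpace ℂ H01]
  [NormedAddCommGroup H11] [InnerProductSpace ℂ H11]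
  (ι0 : H01 →L[ℂ] H0) (d : H01 →L[ℂ] H1) (ι1 : H11 →L[ℂ] H1) (δ : H11 →L[ℂ] H0)

def adjointDomain : Submodule ℂ H11 where
  carrier := {g | ∀ f, ⟪d f, ι1 g⟫_ℂ = ⟪ι0 f, δ g⟫_ℂ}
  add_mem' ha hb f := by simp only [map_add, inner_add_right, ha f, hb f]
  zero_mem' f := by simp
  smul_mem' c g hg f := by simp only [map_smul, inner_smul_right, hg f]

variable {ι0 d ι1 δ} in
theorem mem_adjointDomain {g : H11} :
    g ∈ adjointDomain ι0 d ι1 δ ↔ ∀ f, ⟪d f, ι1 g⟫_ℂ = ⟪ι0 f, δ g⟫_ℂ :=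
  Iff.rfl

theorem isClosed_adjointDomain : IsClosed (adjointDomain ι0 d ι1 δ : Set H11) := by
  simp only [adjointDomain, Submodule.coe_set_mk, AddSubmonoid.coe_set_mk,
    AddSubsemigroup.coe_set_mk, Set.ofPred_forall]
  exact isClosed_iInter fun f ↦ isClosed_eq (continuous_const.inner ι1.continuous)
    (continuous_const.inner δ.continuous)

variable {ι0 d ι1 δ}

theorem norm_eq_of_graph_rotate
    (hgraph0 : ∀ f g : H01, ⟪f, g⟫_ℂ = ⟪ι0 f, ι0 g⟫_ℂ + ⟪d f, d g⟫_ℂ)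
    (hgraph1 : ∀ f g : H11, ⟪f, g⟫_ℂ = ⟪ι1 f, ι1 g⟫_ℂ + ⟪δ f, δ g⟫_ℂ)
    {h : H01} {m : H11} (hι0 : ι0 h = δ m) (hd : d h = -ι1 m) : ‖h‖ = ‖m‖ := by
  have : ⟪h, h⟫_ℂ = ⟪m, m⟫_ℂ := by rw [hgraph0, hgraph1, hι0, hd, inner_neg_neg, add_comm]
  rw [norm_eq_sqrt_re_inner (𝕜 := ℂ), norm_eq_sqrt_re_inner (𝕜 := ℂ), this]

theorem eq_zero_of_graph_rotate
    (hgraph1 : ∀ f g : H11, ⟪f, g⟫_ℂ = ⟪ι1 f, ι1 g⟫_ℂ + ⟪δ f, δ g⟫_ℂ)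
    {h : H01} {m : H11} (hι0 : ι0 h = δ m) (hd : d h = -ι1 m)
    (hadj : ⟪d h, ι1 m⟫_ℂ = ⟪ι0 h, δ m⟫_ℂ) : m = 0 := by
  rw [hι0, hd, inner_neg_left] at hadj
  rw [← inner_self_eq_zero (𝕜 := ℂ), hgraph1]
  linear_combination -hadj

theorem exists_graph_rotate_of_mem_orthogonal [CompleteSpace H01]
    (hgraph0 : ∀ f g : H01, ⟪f, g⟫_ℂ = ⟪ι0 f, ι0 g⟫_ℂ + ⟪d f, d g⟫_ℂ)
    (hgraph1 : ∀ f g : H11, ⟪f, g⟫_ℂ = ⟪ι1 f, ι1 g⟫_ℂ + ⟪δ f, δ g⟫_ℂ)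
    (hadj : ∀ (x : H1) (y : H0), (∀ f, ⟪d f, x⟫_ℂ = ⟪ι0 f, y⟫_ℂ) →
      ∃ k : H11, ι1 k = x ∧ δ k = y)
    {m : H11} (hm : m ∈ (adjointDomain ι0 d ι1 δ)ᗮ) : ∃ h, ι0 h = δ m ∧ d h = -ι1 m := by
  -- Take `h` by Riesz; the defect `(d h + ι1 m, δ m - ι0 h)` lies in the graph of `d*`, so it
  -- comes from some `k ∈ adjointDomain`, and `k ⊥ m` forces `⟪k, k⟫ = 0`.
  set h := (InnerProductSpace.toDual ℂ H01).symm
    ((innerSL ℂ (δ m)).comp ι0 - (innerSL ℂ (ι1 m)).comp d)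
  have hh : ∀ f, ⟪h, f⟫_ℂ = ⟪δ m, ι0 f⟫_ℂ - ⟪ι1 m, d f⟫_ℂ := fun f ↦ by
    simp [h, InnerProductSpace.toDual_symm_apply]
  set x := d h + ι1 m
  set y := δ m - ι0 h
  have hxy' : ∀ f, ⟪x, d f⟫_ℂ = ⟪y, ι0 f⟫_ℂ := fun f ↦ by
    have := hh f
    rw [hgraph0] at this
    simp only [x, y, inner_add_left, inner_sub_left]
    linear_combination this
  have hxy : ∀ f, ⟪d f, x⟫_ℂ = ⟪ι0 f, y⟫_ℂ := fun f ↦ by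
    rw [← inner_conj_symm, hxy', inner_conj_symm]
  obtain ⟨k, hkx, hky⟩ := hadj x y hxy
  have hkm : ⟪k, m⟫_ℂ = 0 := inner_eq_zero_symm.mp <|
    (Submodule.mem_orthogonal' _ m).mp hm k (by rw [mem_adjointDomain, hkx, hky]; exact hxy)
  rw [hgraph1, hkx, hky] at hkm
  have hk : ⟪k, k⟫_ℂ = 0 :=
    calc ⟪k, k⟫_ℂ = ⟪x, d h + ι1 m⟫_ℂ + ⟪y, δ m - ι0 h⟫_ℂ := by rw [hgraph1, hkx, hky]
      _ = (⟪x, d h⟫_ℂ - ⟪y, ι0 h⟫_ℂ) + (⟪x, ι1 m⟫_ℂ + ⟪y, δ m⟫_ℂ) := by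
        rw [inner_add_right, inner_sub_right]; ring
      _ = 0 := by rw [hxy' h, sub_self, hkm, add_zero]
  rw [inner_self_eq_zero] at hk
  rw [hk, map_zero] at hkx hky
  exact ⟨h, (sub_eq_zero.mp hky.symm).symm, eq_neg_of_add_eq_zero_left hkx.symm⟩

theorem exists_graph_rotate_of_mem_orthogonal_ker {G : Type*} [NormedAddCommGroup G]
    [NormedSpace ℂ G] (γ0 : H01 →L[ℂ] G)
    (hgraph0 : ∀ f g : H01, ⟪f, g⟫_ℂ = ⟪ι0 f, ι0 g⟫_ℂ + ⟪d f, d g⟫_ℂ)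
    (hadj : ∀ (x : H1) (y : H0), (∀ f, γ0 f = 0 → ⟪d f, x⟫_ℂ = ⟪ι0 f, y⟫_ℂ) →
      ∃ k : H11, ι1 k = x ∧ δ k = y)
    {h : H01} (hh : h ∈ γ0.kerᗮ) : ∃ m, ι0 h = δ m ∧ d h = -ι1 m := by
  obtain ⟨m, hm1, hmδ⟩ := hadj (-d h) (ι0 h) fun f hf ↦ by
    have := (Submodule.mem_orthogonal _ h).mp hh f hf
    rw [hgraph0] at this
    rw [inner_neg_right]
    linear_combination -this
  exact ⟨m, hmδ.symm, by rw [hm1, neg_neg]⟩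

theorem exists_adjointDomain_add_graph_rotate [CompleteSpace H01] [CompleteSpace H11]
    (hgraph0 : ∀ f g : H01, ⟪f, g⟫_ℂ = ⟪ι0 f, ι0 g⟫_ℂ + ⟪d f, d g⟫_ℂ)
    (hgraph1 : ∀ f g : H11, ⟪f, g⟫_ℂ = ⟪ι1 f, ι1 g⟫_ℂ + ⟪δ f, δ g⟫_ℂ)
    (hadj : ∀ (x : H1) (y : H0), (∀ f, ⟪d f, x⟫_ℂ = ⟪ι0 f, y⟫_ℂ) →
      ∃ k : H11, ι1 k = x ∧ δ k = y)
    (g : H11) : ∃ k ∈ adjointDomain ι0 d ι1 δ, ∃ m h,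
      g = k + m ∧ ι0 h = δ m ∧ d h = -ι1 m ∧ ‖h‖ ≤ ‖g‖ := by
  have := (isClosed_adjointDomain ι0 d ι1 δ).completeSpace_coe
  obtain ⟨k, hk, m, hm, rfl, hmg⟩ :=
    (adjointDomain ι0 d ι1 δ).exists_add_mem_mem_orthogonal_norm_le g
  obtain ⟨h, hι0, hd⟩ := exists_graph_rotate_of_mem_orthogonal hgraph0 hgraph1 hadj hm
  exact ⟨k, hk, m, h, rfl, hι0, hd, (norm_eq_of_graph_rotate hgraph0 hgraph1 hι0 hd).trans_le hmg⟩

theorem exists_graph_rotate_map_eq [CompleteSpace H01] {G : Type*} [NormedAddCommGroup G]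
    [NormedSpace ℂ G] (γ0 : H01 →L[ℂ] G)
    (hgraph0 : ∀ f g : H01, ⟪f, g⟫_ℂ = ⟪ι0 f, ι0 g⟫_ℂ + ⟪d f, d g⟫_ℂ)
    (hgraph1 : ∀ f g : H11, ⟪f, g⟫_ℂ = ⟪ι1 f, ι1 g⟫_ℂ + ⟪δ f, δ g⟫_ℂ)
    (hadj : ∀ (x : H1) (y : H0), (∀ f, γ0 f = 0 → ⟪d f, x⟫_ℂ = ⟪ι0 f, y⟫_ℂ) →
      ∃ k : H11, ι1 k = x ∧ δ k = y)
    (f : H01) : ∃ h m, γ0 f = γ0 h ∧ ι0 h = δ m ∧ d h = -ι1 m ∧ ‖m‖ ≤ ‖f‖ := by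
  obtain ⟨f0, hf0, h, hh, rfl, hhf⟩ := γ0.ker.exists_add_mem_mem_orthogonal_norm_le f
  obtain ⟨m, hι0, hd⟩ := exists_graph_rotate_of_mem_orthogonal_ker γ0 hgraph0 hadj hh
  refine ⟨h, m, by rw [map_add, show γ0 f0 = 0 from hf0, zero_add], hι0, hd, ?_⟩
  exact (norm_eq_of_graph_rotate hgraph0 hgraph1 hι0 hd).symm.trans_le hhf

end GraphSpaces

theorem statement_6_general
    {H0 H1 G H01 H11 : Type*}
    [NormedAddCommGroup H0] [InnerProductSpace ℂ H0]
    [NormedAddCommGroup H1] [InnerProductSpace ℂ H1]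
    [NormedAddCommGroup G] [InnerProductSpace ℂ G]
    [NormedAddCommGroup H01] [InnerProductSpace ℂ H01] [CompleteSpace H01]
    [NormedAddCommGroup H11] [InnerProductSpace ℂ H11] [CompleteSpace H11]
    (ι0 : H01 →L[ℂ] H0) (d : H01 →L[ℂ] H1) (γ0 : H01 →L[ℂ] G)
    (ι1 : H11 →L[ℂ] H1) (δ : H11 →L[ℂ] H0)
    (hgraph0 : ∀ f g : H01, ⟪f, g⟫_ℂ = ⟪ι0 f, ι0 g⟫_ℂ + ⟪d f, d g⟫_ℂ)
    (hgraph1 : ∀ f g : H11, ⟪f, g⟫_ℂ = ⟪ι1 f, ι1 g⟫_ℂ + ⟪δ f, δ g⟫_ℂ)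
    (hadj1 : ∀ (g : H11) (f : H01), γ0 f = 0 → ⟪d f, ι1 g⟫_ℂ = ⟪ι0 f, δ g⟫_ℂ)
    (hadj2 : ∀ (g1 : H1) (h0 : H0),
      (∀ f : H01, γ0 f = 0 → ⟪d f, g1⟫_ℂ = ⟪ι0 f, h0⟫_ℂ) →
      ∃ g : H11, ι1 g = g1 ∧ δ g = h0)
    (γ1 : H11 →L[ℂ] G)
    (hγ1K : ∀ g : H11, (∀ f : H01, ⟪d f, ι1 g⟫_ℂ = ⟪ι0 f, δ g⟫_ℂ) → γ1 g = 0)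
    (hγ1N : ∀ (g : H11) (n : H01),
      (∃ h : H01, ι0 h = δ g ∧ d h = -(ι1 g)) → ι0 n = δ g → γ1 g = -(γ0 n))
    : (∀ g : H11, γ1 g = 0 ↔ ∀ f : H01, ⟪d f, ι1 g⟫_ℂ = ⟪ι0 f, δ g⟫_ℂ) ∧
      ‖γ1‖ = ‖γ0‖ ∧
      Set.range γ1 = Set.range γ0 := by
  have decompose := exists_adjointDomain_add_graph_rotate hgraph0 hgraph1
    fun x y hxy ↦ hadj2 x y fun f _ ↦ hxy f
  have hγ1_rotate {m : H11} {h : H01} (hι0 : ι0 h = δ m) (hd : d h = -ι1 m) : γ1 m = -γ0 h :=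
    hγ1N m h ⟨h, hι0, hd⟩ hι0
  have γ1_eq_γ0 (g : H11) : ∃ h, ‖h‖ ≤ ‖g‖ ∧ γ1 g = γ0 h := by
    obtain ⟨k, hk, m, h, rfl, hι0, hd, hhg⟩ := decompose g
    refine ⟨-h, by rwa [norm_neg], ?_⟩
    rw [map_add, hγ1K k hk, zero_add, hγ1_rotate hι0 hd, map_neg]
  have γ0_eq_γ1 (f : H01) : ∃ m, ‖m‖ ≤ ‖f‖ ∧ γ0 f = γ1 m := by
    obtain ⟨h, m, hf, hι0, hd, hmf⟩ := exists_graph_rotate_map_eq γ0 hgraph0 hgraph1 hadj2 f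
    exact ⟨-m, by rwa [norm_neg], by rw [map_neg, hγ1_rotate hι0 hd, neg_neg, hf]⟩
  refine ⟨fun g ↦ ⟨fun hg ↦ ?_, hγ1K g⟩,
    le_antisymm (γ1.opNorm_le_of_forall_exists_norm_le γ0 γ1_eq_γ0)
      (γ0.opNorm_le_of_forall_exists_norm_le γ1 γ0_eq_γ1), ?_⟩
  · obtain ⟨k, hk, m, h, rfl, hι0, hd, -⟩ := decompose g
    rw [map_add, hγ1K k hk, zero_add, hγ1_rotate hι0 hd, neg_eq_zero] at hg
    rw [eq_zero_of_graph_rotate hgraph1 hι0 hd (hadj1 m h hg), add_zero]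
    exact hk
  · refine Set.Subset.antisymm ?_ ?_
    · rintro _ ⟨g, rfl⟩
      obtain ⟨h, -, hg⟩ := γ1_eq_γ0 g
      exact ⟨h, hg.symm⟩
    · rintro _ ⟨f, rfl⟩
      obtain ⟨m, -, hf⟩ := γ0_eq_γ1 f
      exact ⟨m, hf.symm⟩

theorem statement_6
    {H0 H1 G H01 H11 : Type*}
    [NormedAddCommGroup H0] [InnerProductSpace ℂ H0] [CompleteSpace H0]
    [NormedAddCommGroup H1] [InnerProductSpace ℂ H1] [CompleteSpace H1]
    [NormedAddCommGroup G] [InnerProductSpace ℂ G] [CompleteSpace G]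
    [NormedAddCommGroup H01] [InnerProductSpace ℂ H01] [CompleteSpace H01]
    [NormedAddCommGroup H11] [InnerProductSpace ℂ H11] [CompleteSpace H11]
    (ι0 : H01 →L[ℂ] H0) (d : H01 →L[ℂ] H1) (γ0 : H01 →L[ℂ] G)
    (ι1 : H11 →L[ℂ] H1) (δ : H11 →L[ℂ] H0)
    (hι0 : Function.Injective ι0) (hι1 : Function.Injective ι1)
    (hgraph0 : ∀ f g : H01, ⟪f, g⟫_ℂ = ⟪ι0 f, ι0 g⟫_ℂ + ⟪d f, d g⟫_ℂ)
    (hgraph1 : ∀ f g : H11, ⟪f, g⟫_ℂ = ⟪ι1 f, ι1 g⟫_ℂ + ⟪δ f, δ g⟫_ℂ)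
    (hdom : Dense (Set.range ι0))
    (hker : Dense (ι0 '' {f : H01 | γ0 f = 0}))
    (hran : Dense (Set.range γ0))
    (hadj1 : ∀ (g : H11) (f : H01), γ0 f = 0 → ⟪d f, ι1 g⟫_ℂ = ⟪ι0 f, δ g⟫_ℂ)
    (hadj2 : ∀ (g1 : H1) (h0 : H0),
      (∀ f : H01, γ0 f = 0 → ⟪d f, g1⟫_ℂ = ⟪ι0 f, h0⟫_ℂ) →
      ∃ g : H11, ι1 g = g1 ∧ δ g = h0)
    (γ1 : H11 →L[ℂ] G)
    (hγ1K : ∀ g : H11, (∀ f : H01, ⟪d f, ι1 g⟫_ℂ = ⟪ι0 f, δ g⟫_ℂ) → γ1 g = 0)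
    (hγ1N : ∀ (g : H11) (n : H01),
      (∃ h : H01, ι0 h = δ g ∧ d h = -(ι1 g)) → ι0 n = δ g → γ1 g = -(γ0 n))
    : (∀ g : H11, γ1 g = 0 ↔ ∀ f : H01, ⟪d f, ι1 g⟫_ℂ = ⟪ι0 f, δ g⟫_ℂ) ∧
      ‖γ1‖ = ‖γ0‖ ∧
      Set.range γ1 = Set.range γ0 :=
  statement_6_general ι0 d γ0 ι1 δ hgraph0 hgraph1 hadj1 hadj2 γ1 hγ1K hγ1N
end

section
/- The restriction γ̂1 := γ1|N1 of the boundary map of order 1 to N1 = ker(dδ+1) is a unitary map from N1 (with graph norm of δ) onto G^{1/2} (with the intrinsic norm ‖φ‖_{G^{1/2}} = ‖(γ̂0)^{-1}φ‖_{H0^1}). -/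
/-!
Both spaces carry graph inner products, so `d : N0 → N1` and `-δ : N1 → N0` are mutually
inverse isometries, and `γ1 = γ0 ∘ (-δ)` on `N1` by definition of `γ1`. It therefore suffices
that `γ0` maps `N0` bijectively onto `ran γ0`. Injectivity is Green's formula: an element of `N0`
with vanishing trace is orthogonal to itself. Surjectivity: the part of `f` orthogonal to
`ker γ0` lies in `N0` by the characterisation of `dom δ`, and has the same trace as `f`.
-/

open scoped InnerProductSpace

section

variable {A B E F G : Type*}
  [NormedAddCommGroup A] [InnerProductSpace ℂ A] [NormedAddCommGroup B] [InnerProductSpace ℂ B]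
  [NormedAddCommGroup E] [InnerProductSpace ℂ E] [NormedAddCommGroup F] [InnerProductSpace ℂ F]
  [NormedAddCommGroup G] [InnerProductSpace ℂ G]

/-- `A` is the domain of the operator `T` with its graph inner product, `ι` the inclusion. -/
def IsGraphInner (ι : A →L[ℂ] E) (T : A →L[ℂ] F) : Prop :=
  ∀ x y : A, ⟪x, y⟫_ℂ = ⟪ι x, ι y⟫_ℂ + ⟪T x, T y⟫_ℂ

namespace IsGraphInner

variable {ι : A →L[ℂ] E} {T : A →L[ℂ] F}

theorem norm_sq (h : IsGraphInner ι T) (x : A) : ‖x‖ ^ 2 = ‖ι x‖ ^ 2 + ‖T x‖ ^ 2 := by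
  have hx := h x x
  simp only [inner_self_eq_norm_sq_to_K] at hx
  exact_mod_cast hx

theorem eq_zero (h : IsGraphInner ι T) {x : A} (hι : ι x = 0) (hT : T x = 0) : x = 0 := by
  simpa [hι, hT] using h.norm_sq x

end IsGraphInner

/-- `b` is `T a` viewed in the domain of `T'`, and `T' b = -a`. Thus `a ∈ ker (T'T + 1)`,
`b ∈ ker (TT' + 1)`, and `a ↦ b` is `d : N0 → N1` for `(ι0, d, ι1, δ)`,
`-δ : N1 → N0` for `(ι1, δ, ι0, d)`. -/
def IsCrossPair (ι : A →L[ℂ] E) (T : A →L[ℂ] F) (ι' : B →L[ℂ] F) (T' : B →L[ℂ] E)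
    (a : A) (b : B) : Prop :=
  ι' b = T a ∧ T' b = -(ι a)

namespace IsCrossPair

variable {ι : A →L[ℂ] E} {T : A →L[ℂ] F} {ι' : B →L[ℂ] F} {T' : B →L[ℂ] E}
  {a a' : A} {b b' : B}

theorem neg_symm (h : IsCrossPair ι T ι' T' a b) : IsCrossPair ι' T' ι T (-b) a :=
  ⟨by rw [map_neg, h.2, neg_neg], by rw [map_neg, h.1, neg_neg]⟩

theorem sub (h : IsCrossPair ι T ι' T' a b) (h' : IsCrossPair ι T ι' T' a' b') :
    IsCrossPair ι T ι' T' (a - a') (b - b') :=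
  ⟨by rw [map_sub, map_sub, h.1, h'.1],
    by rw [map_sub, map_sub, h.2, h'.2, neg_sub_neg, neg_sub]⟩

theorem norm_eq (hA : IsGraphInner ι T) (hB : IsGraphInner ι' T')
    (h : IsCrossPair ι T ι' T' a b) : ‖a‖ = ‖b‖ := by
  have hsq : ‖a‖ ^ 2 = ‖b‖ ^ 2 := by
    rw [hA.norm_sq, hB.norm_sq, h.1, h.2, norm_neg, add_comm]
  exact (sq_eq_sq₀ (norm_nonneg a) (norm_nonneg b)).mp hsq

theorem right_unique (hB : IsGraphInner ι' T') (h : IsCrossPair ι T ι' T' a b)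
    (h' : IsCrossPair ι T ι' T' a b') : b = b' :=
  sub_eq_zero.mp <| hB.eq_zero (by rw [map_sub, h.1, h'.1, sub_self])
    (by rw [map_sub, h.2, h'.2, sub_self])

variable {γ : A →L[ℂ] G}

theorem eq_zero_of_trace_eq_zero (hA : IsGraphInner ι T)
    (hgreen : ∀ (b : B) (a : A), γ a = 0 → ⟪T a, ι' b⟫_ℂ = ⟪ι a, T' b⟫_ℂ)
    (h : IsCrossPair ι T ι' T' a b) (hγ : γ a = 0) : a = 0 := by
  have hgreen_ab := hgreen b a hγ
  rw [h.1, h.2, inner_neg_right] at hgreen_ab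
  have hself : ⟪a, a⟫_ℂ = 0 := by rw [hA, hgreen_ab, add_neg_cancel]
  exact inner_self_eq_zero.mp hself

theorem eq_of_trace_eq (hA : IsGraphInner ι T)
    (hgreen : ∀ (b : B) (a : A), γ a = 0 → ⟪T a, ι' b⟫_ℂ = ⟪ι a, T' b⟫_ℂ)
    (h : IsCrossPair ι T ι' T' a b) (h' : IsCrossPair ι T ι' T' a' b') (hγ : γ a = γ a') :
    a = a' :=
  sub_eq_zero.mp <|
    (h.sub h').eq_zero_of_trace_eq_zero hA hgreen (by rw [map_sub, hγ, sub_self])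

end IsCrossPair

variable {ι : A →L[ℂ] E} {T : A →L[ℂ] F} {ι' : B →L[ℂ] F} {T' : B →L[ℂ] E}

theorem exists_isCrossPair_of_mem_orthogonal_ker {γ : A →L[ℂ] G} (hA : IsGraphInner ι T)
    (hdomT' : ∀ (f : F) (e : E), (∀ a : A, γ a = 0 → ⟪T a, f⟫_ℂ = ⟪ι a, e⟫_ℂ) →
      ∃ b : B, ι' b = f ∧ T' b = e)
    {z : A} (hz : z ∈ (LinearMap.ker (γ : A →ₗ[ℂ] G))ᗮ) :
    ∃ b, IsCrossPair ι T ι' T' z b := by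
  refine hdomT' (T z) (-(ι z)) fun a ha => ?_
  have horth : ⟪a, z⟫_ℂ = 0 := hz a ha
  rw [hA, ← eq_neg_iff_add_eq_zero] at horth
  rw [inner_neg_right, horth, neg_neg]

theorem exists_isCrossPair_trace_eq [CompleteSpace A] {γ : A →L[ℂ] G} (hA : IsGraphInner ι T)
    (hdomT' : ∀ (f : F) (e : E), (∀ a : A, γ a = 0 → ⟪T a, f⟫_ℂ = ⟪ι a, e⟫_ℂ) →
      ∃ b : B, ι' b = f ∧ T' b = e)
    (f : A) : ∃ z, (∃ b, IsCrossPair ι T ι' T' z b) ∧ γ z = γ f := by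
  set K := LinearMap.ker (γ : A →ₗ[ℂ] G)
  have : CompleteSpace K := γ.isClosed_ker.completeSpace_coe
  obtain ⟨y, hy, z, hz, rfl⟩ := K.exists_add_mem_mem_orthogonal f
  have hγy : γ y = 0 := hy
  exact ⟨z, exists_isCrossPair_of_mem_orthogonal_ker hA hdomT' hz,
    by rw [map_add, hγy, zero_add]⟩

end

theorem statement_7_general
    {H0 H1 G H01 H11 : Type*}
    [NormedAddCommGroup H0] [InnerProductSpace ℂ H0]
    [NormedAddCommGroup H1] [InnerProductSpace ℂ H1]
    [NormedAddCommGroup G] [InnerProductSpace ℂ G]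
    [NormedAddCommGroup H01] [InnerProductSpace ℂ H01] [CompleteSpace H01]
    [NormedAddCommGroup H11] [InnerProductSpace ℂ H11]
    (ι0 : H01 →L[ℂ] H0) (d : H01 →L[ℂ] H1) (γ0 : H01 →L[ℂ] G)
    (ι1 : H11 →L[ℂ] H1) (δ : H11 →L[ℂ] H0)
    (hgraph0 : ∀ f g : H01, ⟪f, g⟫_ℂ = ⟪ι0 f, ι0 g⟫_ℂ + ⟪d f, d g⟫_ℂ)
    (hgraph1 : ∀ f g : H11, ⟪f, g⟫_ℂ = ⟪ι1 f, ι1 g⟫_ℂ + ⟪δ f, δ g⟫_ℂ)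
    (hadj1 : ∀ (g : H11) (f : H01), γ0 f = 0 → ⟪d f, ι1 g⟫_ℂ = ⟪ι0 f, δ g⟫_ℂ)
    (hadj2 : ∀ (g1 : H1) (h0 : H0),
      (∀ f : H01, γ0 f = 0 → ⟪d f, g1⟫_ℂ = ⟪ι0 f, h0⟫_ℂ) →
      ∃ g : H11, ι1 g = g1 ∧ δ g = h0)
    (γ1 : H11 →L[ℂ] G)
    (hγ1N : ∀ (g : H11) (n : H01),
      (∃ h : H01, ι0 h = δ g ∧ d h = -(ι1 g)) → ι0 n = δ g → γ1 g = -(γ0 n))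
    : (∀ g g' : H11, (∃ h : H01, ι0 h = δ g ∧ d h = -(ι1 g)) →
        (∃ h : H01, ι0 h = δ g' ∧ d h = -(ι1 g')) → γ1 g = γ1 g' → g = g') ∧
      (∀ g : H11, (∃ h : H01, ι0 h = δ g ∧ d h = -(ι1 g)) →
        γ1 g ∈ Set.range γ0 ∧
        ∀ n : H01, (∃ g' : H11, ι1 g' = d n ∧ δ g' = -(ι0 n)) →
          γ0 n = γ1 g → ‖n‖ = ‖g‖) ∧
      (∀ φ ∈ Set.range γ0, ∃ g : H11,
        (∃ h : H01, ι0 h = δ g ∧ d h = -(ι1 g)) ∧ γ1 g = φ) := by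
  have hγ1 : ∀ g h, IsCrossPair ι1 δ ι0 d g h → γ1 g = γ0 (-h) := fun g h hgh => by
    rw [hγ1N g h ⟨h, hgh⟩ hgh.1, map_neg]
  have hinj {a a' : H01} {b b' : H11} (h : IsCrossPair ι0 d ι1 δ a b)
      (h' : IsCrossPair ι0 d ι1 δ a' b') (hγ : γ0 a = γ0 a') : a = a' :=
    h.eq_of_trace_eq hgraph0 hadj1 h' hγ
  refine ⟨?_, ?_, ?_⟩
  · rintro g g' ⟨h, hgh : IsCrossPair ι1 δ ι0 d g h⟩
      ⟨h', hgh' : IsCrossPair ι1 δ ι0 d g' h'⟩ hγ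
    have hh : -h = -h' :=
      hinj hgh.neg_symm hgh'.neg_symm (by rw [← hγ1 g h hgh, ← hγ1 g' h' hgh', hγ])
    exact hgh.neg_symm.right_unique hgraph1 (hh ▸ hgh'.neg_symm)
  · rintro g ⟨h, hgh : IsCrossPair ι1 δ ι0 d g h⟩
    refine ⟨⟨-h, (hγ1 g h hgh).symm⟩, fun n ⟨g', hng'⟩ hγn => ?_⟩
    rw [hinj hng' hgh.neg_symm (hγn.trans (hγ1 g h hgh))]
    exact hgh.neg_symm.norm_eq hgraph0 hgraph1
  · rintro φ ⟨f, rfl⟩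
    obtain ⟨z, ⟨g, hzg⟩, hz⟩ := exists_isCrossPair_trace_eq hgraph0 hadj2 (-f)
    refine ⟨-g, ⟨z, hzg.neg_symm⟩, ?_⟩
    rw [hγ1 _ _ hzg.neg_symm, map_neg, hz, map_neg, neg_neg]

theorem statement_7
    {H0 H1 G H01 H11 : Type*}
    [NormedAddCommGroup H0] [InnerProductSpace ℂ H0] [CompleteSpace H0]
    [NormedAddCommGroup H1] [InnerProductSpace ℂ H1] [CompleteSpace H1]
    [NormedAddCommGroup G] [InnerProductSpace ℂ G] [CompleteSpace G]
    [NormedAddCommGroup H01] [InnerProductSpace ℂ H01] [CompleteSpace H01]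
    [NormedAddCommGroup H11] [InnerProductSpace ℂ H11] [CompleteSpace H11]
    (ι0 : H01 →L[ℂ] H0) (d : H01 →L[ℂ] H1) (γ0 : H01 →L[ℂ] G)
    (ι1 : H11 →L[ℂ] H1) (δ : H11 →L[ℂ] H0)
    (hι0 : Function.Injective ι0) (hι1 : Function.Injective ι1)
    (hgraph0 : ∀ f g : H01, ⟪f, g⟫_ℂ = ⟪ι0 f, ι0 g⟫_ℂ + ⟪d f, d g⟫_ℂ)
    (hgraph1 : ∀ f g : H11, ⟪f, g⟫_ℂ = ⟪ι1 f, ι1 g⟫_ℂ + ⟪δ f, δ g⟫_ℂ)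
    (hdom : Dense (Set.range ι0))
    (hker : Dense (ι0 '' {f : H01 | γ0 f = 0}))
    (hran : Dense (Set.range γ0))
    (hadj1 : ∀ (g : H11) (f : H01), γ0 f = 0 → ⟪d f, ι1 g⟫_ℂ = ⟪ι0 f, δ g⟫_ℂ)
    (hadj2 : ∀ (g1 : H1) (h0 : H0),
      (∀ f : H01, γ0 f = 0 → ⟪d f, g1⟫_ℂ = ⟪ι0 f, h0⟫_ℂ) →
      ∃ g : H11, ι1 g = g1 ∧ δ g = h0)
    (γ1 : H11 →L[ℂ] G)
    (hγ1K : ∀ g : H11, (∀ f : H01, ⟪d f, ι1 g⟫_ℂ = ⟪ι0 f, δ g⟫_ℂ) → γ1 g = 0)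
    (hγ1N : ∀ (g : H11) (n : H01),
      (∃ h : H01, ι0 h = δ g ∧ d h = -(ι1 g)) → ι0 n = δ g → γ1 g = -(γ0 n))
    : (∀ g g' : H11, (∃ h : H01, ι0 h = δ g ∧ d h = -(ι1 g)) →
        (∃ h : H01, ι0 h = δ g' ∧ d h = -(ι1 g')) → γ1 g = γ1 g' → g = g') ∧
      (∀ g : H11, (∃ h : H01, ι0 h = δ g ∧ d h = -(ι1 g)) →
        γ1 g ∈ Set.range γ0 ∧
        ∀ n : H01, (∃ g' : H11, ι1 g' = d n ∧ δ g' = -(ι0 n)) →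
          γ0 n = γ1 g → ‖n‖ = ‖g‖) ∧
      (∀ φ ∈ Set.range γ0, ∃ g : H11,
        (∃ h : H01, ι0 h = δ g ∧ d h = -(ι1 g)) ∧ γ1 g = φ) :=
  statement_7_general ι0 d γ0 ι1 δ hgraph0 hgraph1 hadj1 hadj2 γ1 hγ1N
end

section
/- Abstract Green's formula: for all f0 ∈ dom d and g1 ∈ dom δ, one has ⟨d f0, g1⟩_{H1} - ⟨f0, δ g1⟩_{H0} = ⟨γ0 f0, γ1 g1⟩_{G^{1/2}}, where the right-hand side is the inner product of G^{1/2} induced by the isomorphism (γ̂0)^{-1} : G^{1/2} → N0. -/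
open scoped InnerProductSpace
open ContinuousLinearMap

/-!
Write `B f g = ⟪d f, g⟫ - ⟪f, δ g⟫`. It vanishes when `γ0 f = 0`, and for `g ∈ N1`, written as
`g = d u` with `δ g = -u`, it is the graph inner product `⟪f, u⟫` of `H0^1`. The harmonic
extension `m ∈ N0` of `γ1 g1` gives such a `g_m = d m` with `γ1 g_m = γ0 m = γ1 g1`, so
`B f0 g1 = B n g1 = B n g_m = ⟪n, m⟫` once we know that `B · k = 0` whenever `γ1 k = 0`.

For that, split `k = q + p` along `dom δ = N1 ⊕ N1ᗮ`; `N1` is closed because `g ↦ u` is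
isometric. Since `(ker γ0)ᗮ ⊆ N0`, the form `B · p` vanishes on all of `H0^1`, so `γ1 p = 0`.
Then `γ1 q = γ0 u = 0`, hence `⟪u, u⟫ = B u q = 0`, and `q = 0`.
-/

theorem isClosed_image_snd_of_dist_fst_le {E F : Type*} [MetricSpace E] [MetricSpace F]
    [CompleteSpace E] [CompleteSpace F] {R : Set (E × F)} (hR : IsClosed R)
    (h : ∀ p ∈ R, ∀ q ∈ R, dist p.1 q.1 ≤ dist p.2 q.2) : IsClosed (Prod.snd '' R) := by
  have := hR.completeSpace_coe
  rw [Set.image_eq_range]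
  refine AntilipschitzWith.isClosed_range (K := 1) (AntilipschitzWith.of_le_mul_dist fun p q ↦ ?_)
    (uniformContinuous_snd.comp uniformContinuous_subtype_val)
  rw [Subtype.dist_eq, Prod.dist_eq, NNReal.coe_one, one_mul]
  exact max_le (h _ p.2 _ q.2) le_rfl

namespace BoundaryTriple

def IsGraphInner (𝕜 : Type*) {H E F : Type*} [RCLike 𝕜]
    [NormedAddCommGroup H] [InnerProductSpace 𝕜 H]
    [NormedAddCommGroup E] [InnerProductSpace 𝕜 E] [NormedAddCommGroup F] [InnerProductSpace 𝕜 F]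
    (ι : H → E) (T : H → F) : Prop :=
  ∀ f f' : H, ⟪f, f'⟫_𝕜 = ⟪ι f, ι f'⟫_𝕜 + ⟪T f, T f'⟫_𝕜

variable {𝕜 H0 H1 G H01 H11 : Type*} [RCLike 𝕜]
  [NormedAddCommGroup H0] [InnerProductSpace 𝕜 H0] [NormedAddCommGroup H1] [InnerProductSpace 𝕜 H1]
  [NormedAddCommGroup G] [InnerProductSpace 𝕜 G]
  [NormedAddCommGroup H01] [InnerProductSpace 𝕜 H01]
  [NormedAddCommGroup H11] [InnerProductSpace 𝕜 H11]

variable (ι0 : H01 →L[𝕜] H0) (d : H01 →L[𝕜] H1) (ι1 : H11 →L[𝕜] H1) (δ : H11 →L[𝕜] H0)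

def greenForm (f : H01) (g : H11) : 𝕜 := ⟪d f, ι1 g⟫_𝕜 - ⟪ι0 f, δ g⟫_𝕜

/-- Pairs `(u, g)` with `g = d u` and `δ g = -u`; their first components form `N0`, their
second components `N1 = ker (d δ + 1)`. -/
def harmonicGraph : Submodule 𝕜 (H01 × H11) where
  carrier := {p | ι1 p.2 = d p.1 ∧ δ p.2 = -ι0 p.1}
  add_mem' := by
    rintro p q ⟨hp1, hp2⟩ ⟨hq1, hq2⟩
    exact ⟨by simp [hp1, hq1], by simp [hp2, hq2, add_comm]⟩
  zero_mem' := ⟨by simp, by simp⟩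
  smul_mem' := by
    rintro c p ⟨hp1, hp2⟩
    exact ⟨by simp [hp1], by simp [hp2]⟩

def harmonicSpace : Submodule 𝕜 H11 :=
  (harmonicGraph ι0 d ι1 δ).map (LinearMap.snd 𝕜 H01 H11)

variable {ι0 d ι1 δ}

theorem mem_harmonicSpace {g : H11} :
    g ∈ harmonicSpace ι0 d ι1 δ ↔ ∃ u, (u, g) ∈ harmonicGraph ι0 d ι1 δ := by
  simp [harmonicSpace, Submodule.mem_map]

theorem greenForm_sub_left (f f' : H01) (g : H11) :
    greenForm ι0 d ι1 δ (f - f') g = greenForm ι0 d ι1 δ f g - greenForm ι0 d ι1 δ f' g := by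
  simp only [greenForm, map_sub, inner_sub_left]
  ring

theorem greenForm_sub_right (f : H01) (g g' : H11) :
    greenForm ι0 d ι1 δ f (g - g') = greenForm ι0 d ι1 δ f g - greenForm ι0 d ι1 δ f g' := by
  simp only [greenForm, map_sub, inner_sub_right]
  ring

theorem greenForm_eq_of_γ0_eq {γ0 : H01 →L[𝕜] G}
    (hadj1 : ∀ (g : H11) (f : H01), γ0 f = 0 → ⟪d f, ι1 g⟫_𝕜 = ⟪ι0 f, δ g⟫_𝕜)
    {f f' : H01} (h : γ0 f = γ0 f') (g : H11) :
    greenForm ι0 d ι1 δ f g = greenForm ι0 d ι1 δ f' g := by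
  rw [← sub_eq_zero, ← greenForm_sub_left]
  exact sub_eq_zero.mpr (hadj1 g _ (by rw [map_sub, h, sub_self]))

theorem greenForm_left_of_mem_harmonicGraph
    (hgraph1 : IsGraphInner 𝕜 ι1 δ) {u : H01} {g : H11}
    (hug : (u, g) ∈ harmonicGraph ι0 d ι1 δ) (k : H11) :
    greenForm ι0 d ι1 δ u k = ⟪g, k⟫_𝕜 := by
  obtain ⟨h1, h2⟩ := hug
  rw [greenForm, hgraph1, h1, h2, inner_neg_left]
  exact sub_eq_add_neg _ _

theorem greenForm_right_of_mem_harmonicGraph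
    (hgraph0 : IsGraphInner 𝕜 ι0 d) {u : H01} {g : H11}
    (hug : (u, g) ∈ harmonicGraph ι0 d ι1 δ) (f : H01) :
    greenForm ι0 d ι1 δ f g = ⟪f, u⟫_𝕜 := by
  obtain ⟨h1, h2⟩ := hug
  rw [greenForm, hgraph0, h1, h2, inner_neg_right, sub_neg_eq_add, add_comm]

theorem γ1_eq_γ0_of_mem_harmonicGraph {γ0 : H01 →L[𝕜] G} {γ1 : H11 →L[𝕜] G}
    (hγ1N : ∀ (g : H11) (n : H01),
      (∃ h : H01, ι0 h = δ g ∧ d h = -(ι1 g)) → ι0 n = δ g → γ1 g = -(γ0 n))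
    {u : H01} {g : H11} (hug : (u, g) ∈ harmonicGraph ι0 d ι1 δ) : γ1 g = γ0 u := by
  obtain ⟨h1, h2⟩ := hug
  simpa using hγ1N g (-u) ⟨-u, by simp [h2], by simp [h1]⟩ (by simp [h2])

theorem norm_eq_norm_of_mem_harmonicGraph
    (hgraph0 : IsGraphInner 𝕜 ι0 d) (hgraph1 : IsGraphInner 𝕜 ι1 δ)
    {u : H01} {g : H11} (hug : (u, g) ∈ harmonicGraph ι0 d ι1 δ) : ‖u‖ = ‖g‖ := by
  have h : ⟪u, u⟫_𝕜 = ⟪g, g⟫_𝕜 := by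
    rw [← greenForm_right_of_mem_harmonicGraph hgraph0 hug u,
      greenForm_left_of_mem_harmonicGraph hgraph1 hug g]
  rw [inner_self_eq_norm_sq_to_K, inner_self_eq_norm_sq_to_K] at h
  exact (sq_eq_sq₀ (norm_nonneg _) (norm_nonneg _)).mp (by exact_mod_cast h)

theorem isClosed_harmonicSpace [CompleteSpace H01] [CompleteSpace H11]
    (hgraph0 : IsGraphInner 𝕜 ι0 d) (hgraph1 : IsGraphInner 𝕜 ι1 δ) :
    IsClosed (harmonicSpace ι0 d ι1 δ : Set H11) := by
  have hR : IsClosed (harmonicGraph ι0 d ι1 δ : Set (H01 × H11)) :=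
    (isClosed_eq (by fun_prop) (by fun_prop)).inter (isClosed_eq (by fun_prop) (by fun_prop))
  rw [harmonicSpace, Submodule.map_coe]
  refine isClosed_image_snd_of_dist_fst_le hR fun p hp q hq ↦ ?_
  rw [dist_eq_norm, dist_eq_norm]
  exact (norm_eq_norm_of_mem_harmonicGraph hgraph0 hgraph1 (sub_mem hp hq)).le

theorem exists_mem_harmonicGraph_of_mem_orthogonal_ker {γ0 : H01 →L[𝕜] G}
    (hgraph0 : IsGraphInner 𝕜 ι0 d)
    (hadj2 : ∀ (g1 : H1) (h0 : H0),
      (∀ f : H01, γ0 f = 0 → ⟪d f, g1⟫_𝕜 = ⟪ι0 f, h0⟫_𝕜) → ∃ g : H11, ι1 g = g1 ∧ δ g = h0)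
    {w : H01} (hw : w ∈ ((γ0 : H01 →ₗ[𝕜] G).ker)ᗮ) : ∃ g, (w, g) ∈ harmonicGraph ι0 d ι1 δ :=
  hadj2 (d w) (-ι0 w) fun f hf ↦ by
    have h : ⟪f, w⟫_𝕜 = 0 := (Submodule.mem_orthogonal _ w).mp hw f hf
    rw [hgraph0, add_eq_zero_iff_eq_neg'] at h
    rw [h, inner_neg_right]

theorem greenForm_eq_zero_of_mem_orthogonal_harmonicSpace [CompleteSpace H01]
    (hgraph0 : IsGraphInner 𝕜 ι0 d) (hgraph1 : IsGraphInner 𝕜 ι1 δ) {γ0 : H01 →L[𝕜] G}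
    (hadj1 : ∀ (g : H11) (f : H01), γ0 f = 0 → ⟪d f, ι1 g⟫_𝕜 = ⟪ι0 f, δ g⟫_𝕜)
    (hadj2 : ∀ (g1 : H1) (h0 : H0),
      (∀ f : H01, γ0 f = 0 → ⟪d f, g1⟫_𝕜 = ⟪ι0 f, h0⟫_𝕜) → ∃ g : H11, ι1 g = g1 ∧ δ g = h0)
    {p : H11} (hp : p ∈ (harmonicSpace ι0 d ι1 δ)ᗮ) (f : H01) :
    greenForm ι0 d ι1 δ f p = 0 := by
  have : CompleteSpace ((γ0 : H01 →ₗ[𝕜] G).ker) := γ0.isClosed_ker.completeSpace_coe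
  obtain ⟨h, hh, w, hw, rfl⟩ := ((γ0 : H01 →ₗ[𝕜] G).ker).exists_add_mem_mem_orthogonal f
  obtain ⟨g, hwg⟩ := exists_mem_harmonicGraph_of_mem_orthogonal_ker hgraph0 hadj2 hw
  have hγ0 : γ0 (h + w) = γ0 w := by
    rw [map_add, show γ0 h = 0 from hh, zero_add]
  rw [greenForm_eq_of_γ0_eq hadj1 hγ0, greenForm_left_of_mem_harmonicGraph hgraph1 hwg]
  exact (Submodule.mem_orthogonal _ p).mp hp g (mem_harmonicSpace.mpr ⟨w, hwg⟩)

theorem eq_zero_of_mem_harmonicSpace_of_γ1_eq_zero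
    (hgraph0 : IsGraphInner 𝕜 ι0 d) (hgraph1 : IsGraphInner 𝕜 ι1 δ) {γ0 : H01 →L[𝕜] G}
    (hadj1 : ∀ (g : H11) (f : H01), γ0 f = 0 → ⟪d f, ι1 g⟫_𝕜 = ⟪ι0 f, δ g⟫_𝕜)
    {γ1 : H11 →L[𝕜] G}
    (hγ1N : ∀ (g : H11) (n : H01),
      (∃ h : H01, ι0 h = δ g ∧ d h = -(ι1 g)) → ι0 n = δ g → γ1 g = -(γ0 n))
    {g : H11} (hg : g ∈ harmonicSpace ι0 d ι1 δ) (hγ1 : γ1 g = 0) : g = 0 := by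
  obtain ⟨u, hug⟩ := mem_harmonicSpace.mp hg
  have hu : γ0 u = 0 := γ1_eq_γ0_of_mem_harmonicGraph hγ1N hug ▸ hγ1
  have huu : ⟪u, u⟫_𝕜 = 0 := by
    rw [← greenForm_right_of_mem_harmonicGraph hgraph0 hug u]
    exact sub_eq_zero.mpr (hadj1 g u hu)
  rw [← norm_eq_zero, ← norm_eq_norm_of_mem_harmonicGraph hgraph0 hgraph1 hug,
    inner_self_eq_zero.mp huu, norm_zero]

theorem greenForm_eq_zero_of_γ1_eq_zero [CompleteSpace H01] [CompleteSpace H11]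
    (hgraph0 : IsGraphInner 𝕜 ι0 d) (hgraph1 : IsGraphInner 𝕜 ι1 δ) {γ0 : H01 →L[𝕜] G}
    (hadj1 : ∀ (g : H11) (f : H01), γ0 f = 0 → ⟪d f, ι1 g⟫_𝕜 = ⟪ι0 f, δ g⟫_𝕜)
    (hadj2 : ∀ (g1 : H1) (h0 : H0),
      (∀ f : H01, γ0 f = 0 → ⟪d f, g1⟫_𝕜 = ⟪ι0 f, h0⟫_𝕜) → ∃ g : H11, ι1 g = g1 ∧ δ g = h0)
    {γ1 : H11 →L[𝕜] G}
    (hγ1K : ∀ g : H11, (∀ f : H01, ⟪d f, ι1 g⟫_𝕜 = ⟪ι0 f, δ g⟫_𝕜) → γ1 g = 0)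
    (hγ1N : ∀ (g : H11) (n : H01),
      (∃ h : H01, ι0 h = δ g ∧ d h = -(ι1 g)) → ι0 n = δ g → γ1 g = -(γ0 n))
    {k : H11} (hk : γ1 k = 0) (f : H01) : greenForm ι0 d ι1 δ f k = 0 := by
  have : CompleteSpace (harmonicSpace ι0 d ι1 δ) :=
    (isClosed_harmonicSpace hgraph0 hgraph1).completeSpace_coe
  obtain ⟨q, hq, p, hp, rfl⟩ := (harmonicSpace ι0 d ι1 δ).exists_add_mem_mem_orthogonal k
  have hp0 := greenForm_eq_zero_of_mem_orthogonal_harmonicSpace hgraph0 hgraph1 hadj1 hadj2 hp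
  have hγ1p : γ1 p = 0 := hγ1K p fun f ↦ sub_eq_zero.mp (hp0 f)
  rw [map_add, hγ1p, add_zero] at hk
  rw [eq_zero_of_mem_harmonicSpace_of_γ1_eq_zero hgraph0 hgraph1 hadj1 hγ1N hq hk, zero_add]
  exact hp0 f


end BoundaryTriple
theorem statement_8_general
    {H0 H1 G H01 H11 : Type*}
    [NormedAddCommGroup H0] [InnerProductSpace ℂ H0]
    [NormedAddCommGroup H1] [InnerProductSpace ℂ H1]
    [NormedAddCommGroup G] [InnerProductSpace ℂ G]
    [NormedAddCommGroup H01] [InnerProductSpace ℂ H01] [CompleteSpace H01]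
    [NormedAddCommGroup H11] [InnerProductSpace ℂ H11] [CompleteSpace H11]
    (ι0 : H01 →L[ℂ] H0) (d : H01 →L[ℂ] H1) (γ0 : H01 →L[ℂ] G)
    (ι1 : H11 →L[ℂ] H1) (δ : H11 →L[ℂ] H0)
    (hgraph0 : ∀ f g : H01, ⟪f, g⟫_ℂ = ⟪ι0 f, ι0 g⟫_ℂ + ⟪d f, d g⟫_ℂ)
    (hgraph1 : ∀ f g : H11, ⟪f, g⟫_ℂ = ⟪ι1 f, ι1 g⟫_ℂ + ⟪δ f, δ g⟫_ℂ)
    (hadj1 : ∀ (g : H11) (f : H01), γ0 f = 0 → ⟪d f, ι1 g⟫_ℂ = ⟪ι0 f, δ g⟫_ℂ)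
    (hadj2 : ∀ (g1 : H1) (h0 : H0),
      (∀ f : H01, γ0 f = 0 → ⟪d f, g1⟫_ℂ = ⟪ι0 f, h0⟫_ℂ) →
      ∃ g : H11, ι1 g = g1 ∧ δ g = h0)
    (γ1 : H11 →L[ℂ] G)
    (hγ1K : ∀ g : H11, (∀ f : H01, ⟪d f, ι1 g⟫_ℂ = ⟪ι0 f, δ g⟫_ℂ) → γ1 g = 0)
    (hγ1N : ∀ (g : H11) (n : H01),
      (∃ h : H01, ι0 h = δ g ∧ d h = -(ι1 g)) → ι0 n = δ g → γ1 g = -(γ0 n))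
    : ∀ (f0 : H01) (g1 : H11) (n m : H01),
      (∃ g : H11, ι1 g = d n ∧ δ g = -(ι0 n)) → γ0 n = γ0 f0 →
      (∃ g : H11, ι1 g = d m ∧ δ g = -(ι0 m)) → γ0 m = γ1 g1 →
      ⟪d f0, ι1 g1⟫_ℂ - ⟪ι0 f0, δ g1⟫_ℂ = ⟪n, m⟫_ℂ := by
  open BoundaryTriple in
  rintro f0 g1 n m - hn ⟨gm, hgm⟩ hm
  have hγ1 : γ1 (g1 - gm) = 0 := by
    rw [map_sub, γ1_eq_γ0_of_mem_harmonicGraph hγ1N hgm, hm, sub_self]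
  calc greenForm ι0 d ι1 δ f0 g1 = greenForm ι0 d ι1 δ n g1 :=
        greenForm_eq_of_γ0_eq hadj1 hn.symm g1
    _ = greenForm ι0 d ι1 δ n gm := by
        rw [← sub_eq_zero, ← greenForm_sub_right]
        exact greenForm_eq_zero_of_γ1_eq_zero hgraph0 hgraph1 hadj1 hadj2 hγ1K hγ1N hγ1 n
    _ = ⟪n, m⟫_ℂ := greenForm_right_of_mem_harmonicGraph hgraph0 hgm n

theorem statement_8
    {H0 H1 G H01 H11 : Type*}
    [NormedAddCommGroup H0] [InnerProductSpace ℂ H0] [CompleteSpace H0]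
    [NormedAddCommGroup H1] [InnerProductSpace ℂ H1] [CompleteSpace H1]
    [NormedAddCommGroup G] [InnerProductSpace ℂ G] [CompleteSpace G]
    [NormedAddCommGroup H01] [InnerProductSpace ℂ H01] [CompleteSpace H01]
    [NormedAddCommGroup H11] [InnerProductSpace ℂ H11] [CompleteSpace H11]
    (ι0 : H01 →L[ℂ] H0) (d : H01 →L[ℂ] H1) (γ0 : H01 →L[ℂ] G)
    (ι1 : H11 →L[ℂ] H1) (δ : H11 →L[ℂ] H0)
    (hι0 : Function.Injective ι0) (hι1 : Function.Injective ι1)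
    (hgraph0 : ∀ f g : H01, ⟪f, g⟫_ℂ = ⟪ι0 f, ι0 g⟫_ℂ + ⟪d f, d g⟫_ℂ)
    (hgraph1 : ∀ f g : H11, ⟪f, g⟫_ℂ = ⟪ι1 f, ι1 g⟫_ℂ + ⟪δ f, δ g⟫_ℂ)
    (hdom : Dense (Set.range ι0))
    (hker : Dense (ι0 '' {f : H01 | γ0 f = 0}))
    (hran : Dense (Set.range γ0))
    (hadj1 : ∀ (g : H11) (f : H01), γ0 f = 0 → ⟪d f, ι1 g⟫_ℂ = ⟪ι0 f, δ g⟫_ℂ)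
    (hadj2 : ∀ (g1 : H1) (h0 : H0),
      (∀ f : H01, γ0 f = 0 → ⟪d f, g1⟫_ℂ = ⟪ι0 f, h0⟫_ℂ) →
      ∃ g : H11, ι1 g = g1 ∧ δ g = h0)
    (γ1 : H11 →L[ℂ] G)
    (hγ1K : ∀ g : H11, (∀ f : H01, ⟪d f, ι1 g⟫_ℂ = ⟪ι0 f, δ g⟫_ℂ) → γ1 g = 0)
    (hγ1N : ∀ (g : H11) (n : H01),
      (∃ h : H01, ι0 h = δ g ∧ d h = -(ι1 g)) → ι0 n = δ g → γ1 g = -(γ0 n))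
    : ∀ (f0 : H01) (g1 : H11) (n m : H01),
      (∃ g : H11, ι1 g = d n ∧ δ g = -(ι0 n)) → γ0 n = γ0 f0 →
      (∃ g : H11, ι1 g = d m ∧ δ g = -(ι0 m)) → γ0 m = γ1 g1 →
      ⟪d f0, ι1 g1⟫_ℂ - ⟪ι0 f0, δ g1⟫_ℂ = ⟪n, m⟫_ℂ :=
  statement_8_general ι0 d γ0 ι1 δ hgraph0 hgraph1 hadj1 hadj2 γ1 hγ1K hγ1N
end
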